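/- arXiv:math/0602237 — 6 statements merged into one kernel-verified Lean document; each statement's English description precedes it below -/
import Mathlib

section
/- Let (a_n)_{n≥0} be a sequence of complex numbers, r>0, θ∈ℝ, A>0, B>0. Suppose the power series f̃(ζ) = ∑_{n≥1} a_n ζ^{n−1}/(n−1)! has positive radius of convergence and extends to a holomorphic function on the open strip B_r(θ) satisfying |f̃(ζ)| ≤ A·e^{B|ζ|} for all ζ ∈ B_r(θ). Then the function s_θf(z) := a_0 + ∫_0^{∞e^{iθ}} f̃(ζ) e^{−zζ} dζ is well defined and holomorphic on the half-plane {z ∈ ℂ : Re(z e^{iθ}) > B}, and for every z with Re(z e^{iθ}) > B and every integer n ≥ 0 one has |s_θf(z) − ∑_{k=0}^{n} a_k/z^k| ≤ A·e^{Br} · (n!/r^n) · 1/(|z|^n·(Re(z e^{iθ}) − B)). -/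
/-!
Cauchy estimates on the discs of radius `r` centred on the ray `t e^{iθ}` give
`|F⁽ⁿ⁾(t e^{iθ})| ≤ n! A e^{Br} r⁻ⁿ e^{Bt}`, so every Laplace transform `L[F⁽ⁿ⁾](z)` along the
ray converges for `Re(z e^{iθ}) > B` and is bounded by `n! A e^{Br} r⁻ⁿ / (Re(z e^{iθ}) - B)`.
Integration by parts gives `z L[F⁽ⁿ⁾] = F⁽ⁿ⁾(0) + L[F⁽ⁿ⁺¹⁾]`, and `F⁽ⁿ⁾(0) = a_{n+1}` because
`F` is the Borel transform of `∑ aₙ z⁻ⁿ`. Iterating, `s_θ f(z) - ∑_{k ≤ n} a_k z⁻ᵏ = z⁻ⁿ L[F⁽ⁿ⁾](z)`.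
Holomorphy in `z` comes from differentiating under the integral sign.
-/

open Complex Real MeasureTheory Metric Set Filter

/-- The open strip of width `r` around the ray of direction `θ`:
`B_r(θ) = {ζ ∈ ℂ : dist(ζ, e^{iθ}·[0,∞)) < r}`. -/
noncomputable def borelStrip (r θ : ℝ) : Set ℂ :=
  {ζ : ℂ | Metric.infDist ζ ((fun t : ℝ => (t : ℂ) * Complex.exp (θ * Complex.I)) '' Set.Ici 0) < r}

open scoped Topology

theorem Complex.norm_iteratedDeriv_le_of_forall_mem_ball_norm_le {E : Type*}
    [NormedAddCommGroup E] [NormedSpace ℂ E] [CompleteSpace E] {f : ℂ → E} {c : ℂ} {R C : ℝ}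
    (n : ℕ) (hR : 0 < R) (hf : DifferentiableOn ℂ f (ball c R))
    (hC : ∀ z ∈ ball c R, ‖f z‖ ≤ C) :
    ‖iteratedDeriv n f c‖ ≤ n.factorial * C / R ^ n := by
  have hlim : Tendsto (fun ρ : ℝ => n.factorial * C / ρ ^ n) (𝓝[<] R)
      (𝓝 (n.factorial * C / R ^ n)) :=
    ((continuousAt_const.div (continuousAt_id.pow n) (pow_ne_zero n hR.ne')).tendsto).mono_left
      nhdsWithin_le_nhds
  refine ge_of_tendsto hlim ?_
  filter_upwards [Ioo_mem_nhdsLT hR] with ρ ⟨hρ, hρR⟩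
  exact norm_iteratedDeriv_le_of_forall_mem_sphere_norm_le n hρ
    (hf.diffContOnCl_ball (closedBall_subset_ball hρR))
    fun z hz => hC z (closedBall_subset_ball hρR (sphere_subset_closedBall hz))

theorem iteratedDeriv_eq_factorial_mul_of_hasSum {c : ℕ → ℂ} {f : ℂ → ℂ} {ρ : ℝ}
    (hρ : 0 < ρ) (hf : ∀ ζ : ℂ, ‖ζ‖ < ρ → HasSum (fun n => c n * ζ ^ n) (f ζ)) (n : ℕ) :
    iteratedDeriv n f 0 = n.factorial * c n := by
  set p := FormalMultilinearSeries.ofScalars ℂ c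
  have hρ₂ : ‖((ρ / 2 : ℝ) : ℂ)‖ = ρ / 2 := by simp [abs_of_pos hρ]
  have hrad : ((ρ / 2).toNNReal : ENNReal) ≤ p.radius := by
    refine p.le_radius_of_tendsto (l := 0) ?_
    have h := (hf _ (by rw [hρ₂]; linarith)).summable.tendsto_atTop_zero.norm
    simpa [p, FormalMultilinearSeries.ofScalars_norm, abs_of_pos hρ,
      max_eq_left (by positivity : (0 : ℝ) ≤ ρ / 2)] using h
  have hp : HasFPowerSeriesOnBall f p 0 (ρ / 2).toNNReal := by
    refine ⟨hrad, by simp [hρ], fun {y} hy => ?_⟩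
    have hy : ‖y‖ < ρ := by
      rw [mem_eball_zero_iff, enorm_eq_nnnorm, ENNReal.coe_lt_coe, ← NNReal.coe_lt_coe,
        coe_nnnorm, Real.coe_toNNReal _ (by positivity)] at hy
      linarith
    simpa [p, FormalMultilinearSeries.ofScalars_apply_eq, mul_comm] using hf y hy
  have htaylor := hp.hasFPowerSeriesAt.analyticAt.hasFPowerSeriesAt
  have hcoeff := congrFun (FormalMultilinearSeries.ofScalars_series_injective ℂ ℂ
    (htaylor.eq_formalMultilinearSeries hp.hasFPowerSeriesAt)) n
  rw [← hcoeff, mul_div_cancel₀ _ (by exact_mod_cast n.factorial_ne_zero)]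

/-- `rayLaplace g u z = ∫_0^{∞u} g(ζ) e^{-zζ} dζ`, with the ray parametrised as `ζ = t u`. -/
noncomputable def rayLaplaceIntegrand (g : ℂ → ℂ) (u z : ℂ) (t : ℝ) : ℂ :=
  g (t * u) * cexp (-z * (t * u)) * u

noncomputable def rayLaplace (g : ℂ → ℂ) (u z : ℂ) : ℂ :=
  ∫ t in Ioi (0 : ℝ), rayLaplaceIntegrand g u z t

section RayLaplace

variable {g : ℂ → ℂ} {u z : ℂ} {B C C' : ℝ}

theorem norm_mul_cexp_neg_le {t : ℝ} (hbd : ‖g (t * u)‖ ≤ C * rexp (B * t)) :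
    ‖g (t * u) * cexp (-z * (t * u))‖ ≤ C * rexp (-((z * u).re - B) * t) := by
  have hexp : ‖cexp (-z * (t * u))‖ = rexp (-((z * u).re * t)) := by
    rw [norm_exp, show -z * (t * u) = t * -(z * u) by ring, re_ofReal_mul, neg_re, mul_neg,
      mul_comm]
  calc ‖g (t * u) * cexp (-z * (t * u))‖ ≤ C * rexp (B * t) * rexp (-((z * u).re * t)) := by
        rw [norm_mul, hexp]; gcongr
    _ = C * rexp (-((z * u).re - B) * t) := by rw [mul_assoc, ← Real.exp_add]; ring_nf

theorem norm_rayLaplaceIntegrand_le {t : ℝ} (hbd : ‖g (t * u)‖ ≤ C * rexp (B * t)) :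
    ‖rayLaplaceIntegrand g u z t‖ ≤ C * ‖u‖ * rexp (-((z * u).re - B) * t) := by
  rw [rayLaplaceIntegrand, norm_mul, mul_right_comm]
  gcongr
  exact norm_mul_cexp_neg_le hbd

theorem continuousOn_rayLaplaceIntegrand (hg : ∀ t : ℝ, 0 ≤ t → ContinuousAt g (t * u)) :
    ContinuousOn (rayLaplaceIntegrand g u z) (Ici 0) := by
  have hray : Continuous fun t : ℝ => (t : ℂ) * u := by fun_prop
  refine ((ContinuousOn.mul ?_ (by fun_prop)).mul continuousOn_const)
  exact fun t ht =>
    ((hg t ht).comp (f := fun s : ℝ => (s : ℂ) * u) hray.continuousAt).continuousWithinAt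

theorem integrableOn_rayLaplaceIntegrand (hg : ∀ t : ℝ, 0 ≤ t → ContinuousAt g (t * u))
    (hbd : ∀ t : ℝ, 0 ≤ t → ‖g (t * u)‖ ≤ C * rexp (B * t)) (hz : B < (z * u).re) :
    IntegrableOn (rayLaplaceIntegrand g u z) (Ioi 0) := by
  refine Integrable.mono' ((exp_neg_integrableOn_Ioi 0 (sub_pos.2 hz)).const_mul (C * ‖u‖))
    (((continuousOn_rayLaplaceIntegrand hg).mono Ioi_subset_Ici_self).aestronglyMeasurable
      measurableSet_Ioi) ?_
  filter_upwards [ae_restrict_mem measurableSet_Ioi] with t ht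
  exact norm_rayLaplaceIntegrand_le (hbd t ht.le)

theorem norm_rayLaplace_le (hbd : ∀ t : ℝ, 0 ≤ t → ‖g (t * u)‖ ≤ C * rexp (B * t))
    (hz : B < (z * u).re) : ‖rayLaplace g u z‖ ≤ C * ‖u‖ / ((z * u).re - B) := by
  have hpos : 0 < (z * u).re - B := sub_pos.2 hz
  calc ‖rayLaplace g u z‖ ≤ ∫ t in Ioi (0 : ℝ), C * ‖u‖ * rexp (-((z * u).re - B) * t) := by
        refine norm_integral_le_of_norm_le ((exp_neg_integrableOn_Ioi 0 hpos).const_mul _) ?_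
        filter_upwards [ae_restrict_mem measurableSet_Ioi] with t ht
        exact norm_rayLaplaceIntegrand_le (hbd t ht.le)
    _ = C * ‖u‖ / ((z * u).re - B) := by
        rw [integral_const_mul, integral_exp_mul_Ioi (neg_lt_zero.2 hpos)]
        field_simp
        simp

theorem mul_rayLaplace_eq_add (hg : ∀ t : ℝ, 0 ≤ t → AnalyticAt ℂ g (t * u))
    (hbd : ∀ t : ℝ, 0 ≤ t → ‖g (t * u)‖ ≤ C * rexp (B * t))
    (hbd' : ∀ t : ℝ, 0 ≤ t → ‖deriv g (t * u)‖ ≤ C' * rexp (B * t)) (hz : B < (z * u).re) :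
    z * rayLaplace g u z = g 0 + rayLaplace (deriv g) u z := by
  set φ : ℝ → ℂ := fun t => g (t * u) * cexp (-z * (t * u))
  have hφ : ∀ t ∈ Ici (0 : ℝ), HasDerivAt φ
      (rayLaplaceIntegrand (deriv g) u z t - z * rayLaplaceIntegrand g u z t) t := by
    intro t ht
    have hlin : HasDerivAt (fun ζ : ℂ => ζ * u) u t := by
      simpa using (hasDerivAt_id (t : ℂ)).mul_const u
    have hgt : HasDerivAt (fun ζ : ℂ => g (ζ * u)) (deriv g (t * u) * u) t :=
      (hg t ht).differentiableAt.hasDerivAt.comp (t : ℂ) hlin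
    refine (hgt.mul (hlin.const_mul (-z)).cexp).comp_ofReal.congr_deriv ?_
    unfold rayLaplaceIntegrand
    ring
  have hint := integrableOn_rayLaplaceIntegrand (fun t ht => (hg t ht).continuousAt) hbd hz
  have hint' := integrableOn_rayLaplaceIntegrand (fun t ht => (hg t ht).deriv.continuousAt) hbd' hz
  have hdecay : Tendsto (fun t : ℝ => C * rexp (-((z * u).re - B) * t)) atTop (𝓝 0) := by
    simpa using (tendsto_exp_atBot.comp
      (tendsto_id.const_mul_atTop_of_neg (neg_lt_zero.2 (sub_pos.2 hz)))).const_mul C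
  have hφ_lim : Tendsto φ atTop (𝓝 0) :=
    squeeze_zero_norm' ((eventually_ge_atTop 0).mono fun t ht => norm_mul_cexp_neg_le (hbd t ht))
      hdecay
  have hFTC := integral_Ioi_of_hasDerivAt_of_tendsto' hφ (hint'.sub (hint.const_mul z)) hφ_lim
  rw [integral_sub hint' (hint.const_mul z), integral_const_mul] at hFTC
  simp only [φ, ofReal_zero, zero_mul, mul_zero, Complex.exp_zero, mul_one] at hFTC
  rw [rayLaplace, rayLaplace]
  linear_combination -hFTC

theorem hasDerivAt_rayLaplaceIntegrand (g : ℂ → ℂ) (u z : ℂ) (t : ℝ) :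
    HasDerivAt (fun w => rayLaplaceIntegrand g u w t)
      (rayLaplaceIntegrand (fun ζ => -ζ * g ζ) u z t) z := by
  refine ((((hasDerivAt_neg z).mul_const ((t : ℂ) * u)).cexp.const_mul
    (g (t * u))).mul_const u).congr_deriv ?_
  unfold rayLaplaceIntegrand
  ring

theorem norm_neg_mul_apply_le (hbd : ∀ t : ℝ, 0 ≤ t → ‖g (t * u)‖ ≤ C * rexp (B * t)) {ε : ℝ}
    (hε : 0 < ε) {t : ℝ} (ht : 0 ≤ t) :
    ‖-(t * u) * g (t * u)‖ ≤ C * ‖u‖ / ε * rexp ((B + ε) * t) := by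
  have ht_le : t ≤ rexp (ε * t) / ε := by
    rw [le_div_iff₀ hε]
    linarith [add_one_le_exp (ε * t)]
  calc ‖-(t * u) * g (t * u)‖ = t * ‖u‖ * ‖g (t * u)‖ := by
        rw [norm_mul, norm_neg, norm_mul, norm_real, Real.norm_of_nonneg ht]
    _ ≤ rexp (ε * t) / ε * ‖u‖ * (C * rexp (B * t)) := by
        gcongr
        exact hbd t ht
    _ = C * ‖u‖ / ε * rexp ((B + ε) * t) := by
        rw [add_mul, Real.exp_add]
        ring

theorem hasDerivAt_rayLaplace (hg : ∀ t : ℝ, 0 ≤ t → ContinuousAt g (t * u))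
    (hbd : ∀ t : ℝ, 0 ≤ t → ‖g (t * u)‖ ≤ C * rexp (B * t)) (hz : B < (z * u).re) :
    HasDerivAt (rayLaplace g u) (rayLaplace (fun ζ => -ζ * g ζ) u z) z := by
  obtain ⟨δ, hδ, hzδ⟩ : ∃ δ : ℝ, 0 < δ ∧ B + 2 * δ < (z * u).re :=
    ⟨((z * u).re - B) / 3, by linarith, by linarith⟩
  have hs : {w : ℂ | B + 2 * δ < (w * u).re} ∈ 𝓝 z :=
    (isOpen_lt continuous_const (by fun_prop)).mem_nhds hzδ
  have hg' : ∀ t : ℝ, 0 ≤ t → ContinuousAt (fun ζ => -ζ * g ζ) (t * u) :=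
    fun t ht => continuousAt_id.neg.mul (hg t ht)
  have hbound : ∀ᵐ t ∂volume.restrict (Ioi 0), ∀ w ∈ {w : ℂ | B + 2 * δ < (w * u).re},
      ‖rayLaplaceIntegrand (fun ζ => -ζ * g ζ) u w t‖ ≤ C * ‖u‖ / δ * ‖u‖ * rexp (-δ * t) := by
    filter_upwards [ae_restrict_mem measurableSet_Ioi] with t ht w hw
    refine (norm_rayLaplaceIntegrand_le (norm_neg_mul_apply_le hbd hδ ht.le)).trans ?_
    have hC : 0 ≤ C := by simpa using (norm_nonneg _).trans (hbd 0 le_rfl)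
    gcongr
    · exact (mem_Ioi.1 ht).le
    · linarith
  exact (hasDerivAt_integral_of_dominated_loc_of_deriv_le
    (F := fun w t => rayLaplaceIntegrand g u w t) hs
    (Eventually.of_forall fun w => ((continuousOn_rayLaplaceIntegrand hg).mono
      Ioi_subset_Ici_self).aestronglyMeasurable measurableSet_Ioi)
    (integrableOn_rayLaplaceIntegrand hg hbd hz)
    (((continuousOn_rayLaplaceIntegrand hg').mono Ioi_subset_Ici_self).aestronglyMeasurable
      measurableSet_Ioi)
    hbound ((exp_neg_integrableOn_Ioi 0 hδ).const_mul _)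
    (Eventually.of_forall fun t w _ => hasDerivAt_rayLaplaceIntegrand g u w t)).2

theorem rayLaplace_eq_sum_add (hg : ∀ t : ℝ, 0 ≤ t → AnalyticAt ℂ g (t * u))
    (hbd : ∀ n, ∃ C, ∀ t : ℝ, 0 ≤ t → ‖iteratedDeriv n g (t * u)‖ ≤ C * rexp (B * t))
    (hz : B < (z * u).re) (hz₀ : z ≠ 0) (n : ℕ) :
    rayLaplace g u z = ∑ k ∈ Finset.range n, iteratedDeriv k g 0 / z ^ (k + 1) +
      rayLaplace (iteratedDeriv n g) u z / z ^ n := by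
  induction n with
  | zero => simp
  | succ n ih =>
    obtain ⟨C, hC⟩ := hbd n
    obtain ⟨C', hC'⟩ := hbd (n + 1)
    have hgn : ∀ t : ℝ, 0 ≤ t → AnalyticAt ℂ (iteratedDeriv n g) (t * u) := fun t ht => by
      rw [iteratedDeriv_eq_iterate]
      exact (hg t ht).iterated_deriv n
    have hstep := mul_rayLaplace_eq_add hgn hC (by simpa only [iteratedDeriv_succ] using hC') hz
    rw [← iteratedDeriv_succ] at hstep
    rw [ih, Finset.sum_range_succ, pow_succ]
    field_simp
    linear_combination hstep

end RayLaplace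

theorem isOpen_borelStrip (r θ : ℝ) : IsOpen (borelStrip r θ) :=
  isOpen_lt (continuous_infDist_pt _) continuous_const

theorem ball_subset_borelStrip {r θ t : ℝ} (ht : 0 ≤ t) :
    ball ((t : ℂ) * cexp (θ * I)) r ⊆ borelStrip r θ := fun _ hx =>
  (infDist_le_dist_of_mem (mem_image_of_mem _ (mem_Ici.2 ht))).trans_lt hx

theorem ofReal_mul_cexp_mem_borelStrip {r θ t : ℝ} (hr : 0 < r) (ht : 0 ≤ t) :
    (t : ℂ) * cexp (θ * I) ∈ borelStrip r θ :=
  ball_subset_borelStrip ht (mem_ball_self hr)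

theorem norm_iteratedDeriv_le_of_borelStrip {F : ℂ → ℂ} {r θ A B : ℝ} (hr : 0 < r) (hB : 0 ≤ B)
    (hF : DifferentiableOn ℂ F (borelStrip r θ))
    (hbound : ∀ ζ ∈ borelStrip r θ, ‖F ζ‖ ≤ A * rexp (B * ‖ζ‖)) (n : ℕ) (t : ℝ) (ht : 0 ≤ t) :
    ‖iteratedDeriv n F (t * cexp (θ * I))‖ ≤
      n.factorial * (A * rexp (B * r)) / r ^ n * rexp (B * t) := by
  have hnorm : ‖(t : ℂ) * cexp (θ * I)‖ = t := by
    rw [norm_mul, norm_exp_ofReal_mul_I, norm_real, Real.norm_of_nonneg ht, mul_one]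
  have hA : 0 ≤ A := nonneg_of_mul_nonneg_left
    ((norm_nonneg _).trans (hbound _ (ofReal_mul_cexp_mem_borelStrip hr ht))) (exp_pos _)
  have hball : ∀ x ∈ ball ((t : ℂ) * cexp (θ * I)) r, ‖F x‖ ≤ A * rexp (B * (t + r)) := by
    intro x hx
    refine (hbound x (ball_subset_borelStrip ht hx)).trans ?_
    have hx_norm : ‖x‖ ≤ t + r := by
      linarith [norm_le_norm_add_norm_sub' x ((t : ℂ) * cexp (θ * I)), mem_ball_iff_norm.1 hx]
    gcongr
  calc ‖iteratedDeriv n F (t * cexp (θ * I))‖ ≤ n.factorial * (A * rexp (B * (t + r))) / r ^ n :=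
        norm_iteratedDeriv_le_of_forall_mem_ball_norm_le n hr
          (hF.mono (ball_subset_borelStrip ht)) hball
    _ = n.factorial * (A * rexp (B * r)) / r ^ n * rexp (B * t) := by
        rw [mul_add, Real.exp_add]
        ring

theorem stmt_0_general (a : ℕ → ℂ) (r θ A B : ℝ) (hr : 0 < r) (hB : 0 < B)
    (F : ℂ → ℂ)
    (hconv : ∃ ρ > 0, ∀ ζ : ℂ, ‖ζ‖ < ρ →
      HasSum (fun n : ℕ => a (n + 1) * ζ ^ n / (Nat.factorial n : ℂ)) (F ζ))
    (hF : DifferentiableOn ℂ F (borelStrip r θ))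
    (hbound : ∀ ζ ∈ borelStrip r θ, ‖F ζ‖ ≤ A * Real.exp (B * ‖ζ‖)) :
    (∀ z : ℂ, B < (z * Complex.exp (θ * Complex.I)).re →
      IntegrableOn (fun t : ℝ => F ((t : ℂ) * Complex.exp (θ * Complex.I)) *
        Complex.exp (-z * ((t : ℂ) * Complex.exp (θ * Complex.I))) *
        Complex.exp (θ * Complex.I)) (Set.Ioi (0:ℝ))) ∧
    DifferentiableOn ℂ
      (fun z : ℂ => a 0 + ∫ t in Set.Ioi (0:ℝ),
        F ((t : ℂ) * Complex.exp (θ * Complex.I)) *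
          Complex.exp (-z * ((t : ℂ) * Complex.exp (θ * Complex.I))) * Complex.exp (θ * Complex.I))
      {z : ℂ | B < (z * Complex.exp (θ * Complex.I)).re} ∧
    ∀ z : ℂ, B < (z * Complex.exp (θ * Complex.I)).re → ∀ n : ℕ,
      ‖(a 0 + ∫ t in Set.Ioi (0:ℝ),
          F ((t : ℂ) * Complex.exp (θ * Complex.I)) *
            Complex.exp (-z * ((t : ℂ) * Complex.exp (θ * Complex.I))) *
              Complex.exp (θ * Complex.I))
        - ∑ k ∈ Finset.range (n + 1), a k / z ^ k‖ ≤
      A * Real.exp (B * r) * ((Nat.factorial n : ℝ) / r ^ n) *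
        (1 / (‖z‖ ^ n * ((z * Complex.exp (θ * Complex.I)).re - B))) := by
  have hanalytic : ∀ t : ℝ, 0 ≤ t → AnalyticAt ℂ F (t * cexp (θ * I)) := fun t ht =>
    hF.analyticAt ((isOpen_borelStrip r θ).mem_nhds (ofReal_mul_cexp_mem_borelStrip hr ht))
  have hbd := norm_iteratedDeriv_le_of_borelStrip hr hB.le hF hbound
  have hbd₀ : ∀ t : ℝ, 0 ≤ t → ‖F (t * cexp (θ * I))‖ ≤ A * rexp (B * r) * rexp (B * t) := by
    simpa using hbd 0
  refine ⟨fun z hz => integrableOn_rayLaplaceIntegrand (fun t ht => (hanalytic t ht).continuousAt)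
      hbd₀ hz,
    (differentiableOn_const (a 0)).add fun z hz => (hasDerivAt_rayLaplace
      (fun t ht => (hanalytic t ht).continuousAt) hbd₀ hz).differentiableAt.differentiableWithinAt,
    fun z hz n => ?_⟩
  have hz₀ : z ≠ 0 := by
    rintro rfl
    simp only [zero_mul, zero_re] at hz
    linarith
  obtain ⟨ρ, hρ, hsum⟩ := hconv
  have hcoeff (k : ℕ) : iteratedDeriv k F 0 = a (k + 1) := by
    rw [iteratedDeriv_eq_factorial_mul_of_hasSum hρ (c := fun k => a (k + 1) / k.factorial)
      (fun ζ hζ => by simpa only [div_mul_eq_mul_div] using hsum ζ hζ),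
      mul_div_cancel₀ _ (by exact_mod_cast k.factorial_ne_zero)]
  have hremainder : a 0 + rayLaplace F (cexp (θ * I)) z - ∑ k ∈ Finset.range (n + 1), a k / z ^ k =
      rayLaplace (iteratedDeriv n F) (cexp (θ * I)) z / z ^ n := by
    rw [rayLaplace_eq_sum_add hanalytic (fun k => ⟨_, hbd k⟩) hz hz₀ n, Finset.sum_range_succ']
    simp only [hcoeff]
    ring
  calc ‖a 0 + rayLaplace F (cexp (θ * I)) z - ∑ k ∈ Finset.range (n + 1), a k / z ^ k‖
      = ‖rayLaplace (iteratedDeriv n F) (cexp (θ * I)) z‖ / ‖z‖ ^ n := by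
        rw [hremainder, norm_div, norm_pow]
    _ ≤ n.factorial * (A * rexp (B * r)) / r ^ n * ‖cexp (θ * I)‖ /
          ((z * cexp (θ * I)).re - B) / ‖z‖ ^ n := by
        gcongr
        exact norm_rayLaplace_le (hbd n) hz
    _ = _ := by
        rw [norm_exp_ofReal_mul_I]
        field_simp

theorem stmt_0 (a : ℕ → ℂ) (r θ A B : ℝ) (hr : 0 < r) (hA : 0 < A) (hB : 0 < B)
    (F : ℂ → ℂ)
    (hconv : ∃ ρ > 0, ∀ ζ : ℂ, ‖ζ‖ < ρ →
      HasSum (fun n : ℕ => a (n + 1) * ζ ^ n / (Nat.factorial n : ℂ)) (F ζ))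
    (hF : DifferentiableOn ℂ F (borelStrip r θ))
    (hbound : ∀ ζ ∈ borelStrip r θ, ‖F ζ‖ ≤ A * Real.exp (B * ‖ζ‖)) :
    (∀ z : ℂ, B < (z * Complex.exp (θ * Complex.I)).re →
      IntegrableOn (fun t : ℝ => F ((t : ℂ) * Complex.exp (θ * Complex.I)) *
        Complex.exp (-z * ((t : ℂ) * Complex.exp (θ * Complex.I))) *
        Complex.exp (θ * Complex.I)) (Set.Ioi (0:ℝ))) ∧
    DifferentiableOn ℂ
      (fun z : ℂ => a 0 + ∫ t in Set.Ioi (0:ℝ),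
        F ((t : ℂ) * Complex.exp (θ * Complex.I)) *
          Complex.exp (-z * ((t : ℂ) * Complex.exp (θ * Complex.I))) * Complex.exp (θ * Complex.I))
      {z : ℂ | B < (z * Complex.exp (θ * Complex.I)).re} ∧
    ∀ z : ℂ, B < (z * Complex.exp (θ * Complex.I)).re → ∀ n : ℕ,
      ‖(a 0 + ∫ t in Set.Ioi (0:ℝ),
          F ((t : ℂ) * Complex.exp (θ * Complex.I)) *
            Complex.exp (-z * ((t : ℂ) * Complex.exp (θ * Complex.I))) *
              Complex.exp (θ * Complex.I))
        - ∑ k ∈ Finset.range (n + 1), a k / z ^ k‖ ≤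
      A * Real.exp (B * r) * ((Nat.factorial n : ℝ) / r ^ n) *
        (1 / (‖z‖ ^ n * ((z * Complex.exp (θ * Complex.I)).re - B))) :=
  stmt_0_general a r θ A B hr hB F hconv hF hbound
end

section
/- Let D(1,1) ⊂ ℂ be the open disk of center 1 and radius 1, and let Δ = {−Log s : s ∈ D(1,1)} be its image under the principal branch of −log. Then B_{ln 2} ⊆ Δ ⊆ B_{π/2}, where for r>0, B_r denotes the open strip {ζ∈ℂ : dist(ζ, [0,∞)) < r}. -/
open Complex Real Metric Set

/-- The open strip of width `r` around the positive real axis: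
`B_r = {ζ ∈ ℂ : dist(ζ, [0,∞)) < r}`. -/
noncomputable def borelStrip0 (r : ℝ) : Set ℂ :=
  {ζ : ℂ | Metric.infDist ζ (Complex.ofReal '' Set.Ici 0) < r}

/-- `Δ`, the image of the open disk `D(1,1)` under `s ↦ -Log s`. -/
noncomputable def borelDelta : Set ℂ :=
  (fun s : ℂ => -Complex.log s) '' Metric.ball (1 : ℂ) 1

/-! If `|ζ - t| < log 2` with `t ≥ 0`, then `exp (-ζ) = e^{-t} exp (-(ζ - t))`, where
`|exp w - 1| ≤ e^{|w|} - 1 < 1`, and scaling by `e^{-t} ∈ (0, 1]` towards `0 ∈ ∂D(1,1)` stays in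
the disk; as `|Im ζ| < log 2 < π`, `-Log (exp (-ζ)) = ζ`.
Conversely, `s ∈ D(1,1)` means `|s| < 2 cos (arg s)`. If `|s| ≤ 1`, `-Log s` is at distance
`|arg s| < π/2` from `-log |s| ≥ 0`. If `|s| > 1`, then `|arg s| < π/3` and `0 < log |s| < log 2`,
so `|Log s|² < (log 2)² + (π/3)² < (π/2)²`. -/

lemma Complex.norm_exp_sub_one_le_exp_norm_sub_one (z : ℂ) :
    ‖exp z - 1‖ ≤ Real.exp ‖z‖ - 1 := by
  simpa using norm_exp_sub_sum_le_exp_norm_sub_sum z 1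

lemma exp_mem_ball_one_one {z : ℂ} (hz : ‖z‖ < Real.log 2) : exp z ∈ ball (1 : ℂ) 1 := by
  rw [mem_ball, Complex.dist_eq]
  calc ‖exp z - 1‖ ≤ Real.exp ‖z‖ - 1 := norm_exp_sub_one_le_exp_norm_sub_one z
    _ < Real.exp (Real.log 2) - 1 := by gcongr
    _ = 1 := by norm_num [Real.exp_log]

lemma smul_mem_ball_of_norm_le {E : Type*} [NormedAddCommGroup E] [NormedSpace ℝ E]
    {x s : E} {r c : ℝ} (hx : ‖x‖ ≤ r) (hs : s ∈ ball x r) (hc₀ : 0 < c) (hc₁ : c ≤ 1) :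
    c • s ∈ ball x r := by
  rw [mem_ball_iff_norm] at hs ⊢
  calc ‖c • s - x‖ = ‖c • (s - x) + (c - 1) • x‖ := by
        rw [smul_sub, sub_smul, one_smul]; abel_nf
    _ ≤ c * ‖s - x‖ + (1 - c) * ‖x‖ := by
        refine (norm_add_le _ _).trans ?_
        rw [norm_smul, norm_smul, Real.norm_of_nonneg hc₀.le, Real.norm_of_nonpos (by linarith)]
        simp
    _ < c * r + (1 - c) * r :=
        add_lt_add_of_lt_of_le (by gcongr) (mul_le_mul_of_nonneg_left hx (by linarith))
    _ = r := by ring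

lemma borelStrip0_log_two_subset_borelDelta : borelStrip0 (Real.log 2) ⊆ borelDelta := by
  intro ζ hζ
  obtain ⟨_, ⟨t, ht, rfl⟩, hdist⟩ :=
    (infDist_lt_iff (nonempty_Ici.image _)).1 hζ
  rw [Complex.dist_eq] at hdist
  have him : |ζ.im| < π := calc
    |ζ.im| = |(ζ - t).im| := by simp
    _ ≤ ‖ζ - t‖ := abs_im_le_norm _
    _ < Real.log 2 := hdist
    _ < π := by linarith [Real.log_two_lt_d9, Real.pi_gt_three]
  refine ⟨exp (-ζ), ?_, ?_⟩
  · have hsplit : exp (-ζ) = Real.exp (-t) • exp (-(ζ - t)) := by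
      rw [real_smul, ofReal_exp, ← Complex.exp_add]; congr 1; push_cast; ring
    rw [hsplit]
    exact smul_mem_ball_of_norm_le (by simp) (exp_mem_ball_one_one (by rwa [norm_neg]))
      (Real.exp_pos _) (Real.exp_le_one_iff.2 (neg_nonpos.2 ht))
  · have := abs_lt.1 him
    show -log (exp (-ζ)) = ζ
    rw [Complex.log_exp (by rw [neg_im]; linarith) (by rw [neg_im]; linarith), neg_neg]

lemma mem_ball_one_one_iff {s : ℂ} : s ∈ ball (1 : ℂ) 1 ↔ ‖s‖ ^ 2 < 2 * s.re := by
  rw [mem_ball, Complex.dist_eq, ← sq_lt_one_iff₀ (norm_nonneg _), Complex.sq_norm,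
    Complex.sq_norm, normSq_apply, normSq_apply]
  simp only [sub_re, sub_im, one_re, one_im, sub_zero]
  constructor <;> intro h <;> nlinarith

lemma re_pos_of_mem_ball_one_one {s : ℂ} (hs : s ∈ ball (1 : ℂ) 1) : 0 < s.re := by
  rw [mem_ball, Complex.dist_eq] at hs
  have := abs_lt.1 ((abs_re_le_norm (s - 1)).trans_lt hs)
  simp only [sub_re, one_re] at this
  linarith

lemma ne_zero_of_mem_ball_one_one {s : ℂ} (hs : s ∈ ball (1 : ℂ) 1) : s ≠ 0 := by
  rintro rfl
  simpa using re_pos_of_mem_ball_one_one hs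

lemma norm_lt_two_mul_cos_arg {s : ℂ} (hs : s ∈ ball (1 : ℂ) 1) :
    ‖s‖ < 2 * Real.cos (arg s) := by
  have h := mem_ball_one_one_iff.1 hs
  rw [← norm_mul_cos_arg s] at h
  have hpos : 0 < ‖s‖ := norm_pos_iff.2 (ne_zero_of_mem_ball_one_one hs)
  nlinarith

lemma abs_lt_pi_div_three_of_half_lt_cos {θ : ℝ} (hθ : |θ| ≤ π) (h : 1 / 2 < Real.cos θ) :
    |θ| < π / 3 := by
  by_contra! hle
  have := Real.cos_le_cos_of_nonneg_of_le_pi (by positivity) hθ hle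
  rw [Real.cos_abs, Real.cos_pi_div_three] at this
  linarith

lemma norm_log_lt_pi_div_two {s : ℂ} (hs : s ∈ ball (1 : ℂ) 1) (h1 : 1 < ‖s‖) :
    ‖log s‖ < π / 2 := by
  have hcos := norm_lt_two_mul_cos_arg hs
  have harg : |arg s| < π / 3 :=
    abs_lt_pi_div_three_of_half_lt_cos (abs_arg_le_pi s) (by linarith)
  have hlog : Real.log ‖s‖ < Real.log 2 :=
    Real.log_lt_log (by linarith) (by linarith [Real.cos_le_one (arg s)])
  have hlog₀ : 0 < Real.log ‖s‖ := Real.log_pos h1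
  rw [← sq_lt_sq₀ (norm_nonneg _) (by positivity), Complex.sq_norm, normSq_apply, log_re,
    log_im]
  have harg2 : arg s ^ 2 < (π / 3) ^ 2 := by
    rw [← sq_abs]; exact pow_lt_pow_left₀ harg (abs_nonneg _) two_ne_zero
  nlinarith [Real.log_two_lt_d9, Real.pi_gt_three]

lemma infDist_nonnegReals_le_abs_im {z : ℂ} (hz : 0 ≤ z.re) :
    infDist z (ofReal '' Ici 0) ≤ |z.im| := calc
  infDist z (ofReal '' Ici 0) ≤ dist z z.re := infDist_le_dist_of_mem ⟨z.re, hz, rfl⟩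
  _ = |z.im| := by
    rw [Complex.dist_eq, show z - z.re = z.im * I by apply Complex.ext <;> simp, norm_mul,
      norm_I, mul_one, norm_real, Real.norm_eq_abs]

lemma infDist_nonnegReals_le_norm (z : ℂ) : infDist z (ofReal '' Ici 0) ≤ ‖z‖ := calc
  infDist z (ofReal '' Ici 0) ≤ dist z (0 : ℝ) := infDist_le_dist_of_mem ⟨0, self_mem_Ici, rfl⟩
  _ = ‖z‖ := by simp

lemma borelDelta_subset_borelStrip0_pi_div_two : borelDelta ⊆ borelStrip0 (π / 2) := by
  rintro _ ⟨s, hs, rfl⟩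
  rcases le_or_gt ‖s‖ 1 with hle | hgt
  · calc infDist (-log s) (ofReal '' Ici 0) ≤ |(-log s).im| :=
          infDist_nonnegReals_le_abs_im
            (by simpa [log_re] using Real.log_nonpos (norm_nonneg s) hle)
      _ = |arg s| := by simp [log_im]
      _ < π / 2 := abs_arg_lt_pi_div_two_iff.2 (Or.inl (re_pos_of_mem_ball_one_one hs))
  · calc infDist (-log s) (ofReal '' Ici 0) ≤ ‖-log s‖ := infDist_nonnegReals_le_norm _
      _ < π / 2 := by rw [norm_neg]; exact norm_log_lt_pi_div_two hs hgt

theorem stmt_3 :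
    borelStrip0 (Real.log 2) ⊆ borelDelta ∧ borelDelta ⊆ borelStrip0 (Real.pi / 2) :=
  ⟨borelStrip0_log_two_subset_borelDelta, borelDelta_subset_borelStrip0_pi_div_two⟩
end

section
/- Let f̃ be a holomorphic function on Δ and suppose there exist A>0 and B>0 such that |f̃(ζ)| ≤ A·e^{B|ζ|} for all ζ ∈ Δ. Define φ(s) = f̃(−Log s) for s ∈ D(1,1), and let (b_n)_{n≥0} be the Taylor coefficients of φ at 1, i.e. φ(s) = ∑_{n≥0} b_n (1−s)^n for s ∈ D(1,1). Then for every real C > max(B,1), the series ∑_{n≥1} |b_n|/n^C converges. -/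
/-!
Put `φ(s) = F(-Log s)`. Since `‖Log s‖ ≤ |log ‖s‖| + π`, the growth bound on `F` gives
`‖φ s‖ ≤ M ‖s‖^(-p)` on `D(1,1)` for every `p ≥ B`; take `1 < p < C`. On the circle
`s = 1 + r e^{iθ}` one has `‖s‖ ≥ (1 - r + |θ - π|)/π`, so Cauchy's estimate gives
`‖b_n‖ ≤ M' r^(-n) ∫ (1 - r + |θ - π|)^(-p) dθ ≤ M'' r^(-n) (1 - r)^(1 - p)`.
With `1 - r ≈ 1/n` this is `O(n^(p - 1))`, and `∑ n^(p - 1 - C)` converges.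
-/

open Complex Real Metric Set

theorem Complex.norm_log_le_abs_log_norm_add_pi (s : ℂ) : ‖log s‖ ≤ |Real.log ‖s‖| + π := by
  calc ‖log s‖ ≤ ‖(Real.log ‖s‖ : ℂ)‖ + ‖(arg s : ℂ) * I‖ := norm_add_le _ _
    _ ≤ |Real.log ‖s‖| + π := by
      simpa only [norm_real, Real.norm_eq_abs, norm_mul, norm_I, mul_one, add_le_add_iff_left]
        using abs_arg_le_pi s

theorem Real.exp_mul_abs_log_le {B p t : ℝ} (hB : 0 ≤ B) (hBp : B ≤ p) (ht : 0 < t)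
    (ht2 : t ≤ 2) :
    rexp (B * |Real.log t|) ≤ 2 ^ (B + p) * t ^ (-p) := by
  rcases le_or_gt t 1 with ht1 | ht1
  · calc rexp (B * |Real.log t|) = t ^ (-B) := by
          rw [abs_of_nonpos (Real.log_nonpos ht.le ht1), rpow_def_of_pos ht]; ring_nf
      _ ≤ t ^ (-p) := rpow_le_rpow_of_exponent_ge ht ht1 (by linarith)
      _ ≤ 2 ^ (B + p) * t ^ (-p) :=
          le_mul_of_one_le_left (by positivity) (one_le_rpow one_le_two (by linarith))
  · calc rexp (B * |Real.log t|) = t ^ B := by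
          rw [abs_of_nonneg (Real.log_nonneg ht1.le), rpow_def_of_pos ht]; ring_nf
      _ ≤ 2 ^ B := rpow_le_rpow ht.le ht2 hB
      _ = 2 ^ (B + p) * 2 ^ (-p) := by rw [← rpow_add two_pos]; ring_nf
      _ ≤ 2 ^ (B + p) * t ^ (-p) := by
          gcongr 2 ^ (B + p) * ?_
          exact rpow_le_rpow_of_nonpos ht ht2 (by linarith)

theorem Complex.exp_mul_norm_log_le {B p : ℝ} {s : ℂ} (hB : 0 ≤ B) (hBp : B ≤ p) (hs : 0 < ‖s‖)
    (hs2 : ‖s‖ ≤ 2) : rexp (B * ‖log s‖) ≤ rexp (B * π) * 2 ^ (B + p) * ‖s‖ ^ (-p) :=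
  calc rexp (B * ‖log s‖) ≤ rexp (B * π) * rexp (B * |Real.log ‖s‖|) := by
        rw [← Real.exp_add, ← mul_add, add_comm π]
        gcongr
        exact norm_log_le_abs_log_norm_add_pi s
    _ ≤ rexp (B * π) * (2 ^ (B + p) * ‖s‖ ^ (-p)) := by
        gcongr
        exact Real.exp_mul_abs_log_le hB hBp hs hs2
    _ = _ := by ring

theorem norm_sq_circleMap_one (r θ : ℝ) :
    ‖circleMap 1 r θ‖ ^ 2 = (1 - r) ^ 2 + 2 * r * (1 + Real.cos θ) := by
  rw [circleMap, Complex.sq_norm, normSq_apply]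
  simp only [exp_mul_I, ← ofReal_cos, ← ofReal_sin, add_re, one_re, mul_re, ofReal_re, I_re,
    mul_zero, ofReal_im, I_im, mul_one, sub_self, add_zero, add_im, mul_im, zero_add, zero_mul,
    sub_zero, one_im]
  linear_combination r ^ 2 * Real.sin_sq_add_cos_sq θ

theorem div_pi_le_norm_circleMap_one {r θ : ℝ} (hr : 1 / 2 ≤ r)
    (hθ : |θ - π| ≤ π) : (1 - r + |θ - π|) / π ≤ ‖circleMap 1 r θ‖ := by
  have hcos : 2 * (θ - π) ^ 2 ≤ π ^ 2 * (1 + Real.cos θ) := by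
    have h := Real.cos_le_one_sub_mul_cos_sq hθ
    rw [Real.cos_sub_pi] at h
    have h' := mul_le_mul_of_nonneg_left h (sq_nonneg π)
    field_simp at h'
    linarith
  have hπ2 : 2 ≤ π ^ 2 := by nlinarith [Real.pi_gt_three]
  rw [div_le_iff₀ Real.pi_pos]
  refine le_of_pow_le_pow_left₀ two_ne_zero (by positivity) ?_
  calc (1 - r + |θ - π|) ^ 2 ≤ 2 * (1 - r) ^ 2 + 2 * (θ - π) ^ 2 := by
        nlinarith [sq_nonneg (1 - r - |θ - π|), sq_abs (θ - π)]
    _ ≤ π ^ 2 * (1 - r) ^ 2 + 2 * r * (2 * (θ - π) ^ 2) := by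
        linarith [mul_le_mul_of_nonneg_right hπ2 (sq_nonneg (1 - r)),
          mul_le_mul_of_nonneg_right (by linarith : 1 ≤ 2 * r) (sq_nonneg (θ - π))]
    _ ≤ π ^ 2 * (1 - r) ^ 2 + 2 * r * (π ^ 2 * (1 + Real.cos θ)) := by gcongr
    _ = (‖circleMap 1 r θ‖ * π) ^ 2 := by rw [mul_pow, norm_sq_circleMap_one]; ring

theorem intervalIntegral.integral_comp_abs_sub {f : ℝ → ℝ} {a : ℝ} (c : ℝ) (ha : 0 ≤ a)
    (hf : ContinuousOn f (Icc 0 a)) :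
    ∫ θ in (c - a)..(c + a), f |θ - c| = 2 * ∫ x in 0..a, f x := by
  have hfa : ContinuousOn (fun x => f |x|) (uIcc (-a) a) := by
    refine hf.comp continuous_abs.continuousOn fun x hx => ?_
    rw [uIcc_of_le (by linarith)] at hx
    exact ⟨abs_nonneg x, abs_le.mpr hx⟩
  have hright : ∫ x in 0..a, f |x| = ∫ x in 0..a, f x :=
    integral_congr fun x hx => by
      rw [uIcc_of_le ha] at hx
      simp only [abs_of_nonneg hx.1]
  have hleft : ∫ x in -a..0, f |x| = ∫ x in 0..a, f |x| := by
    simpa only [abs_neg, neg_zero, neg_neg] using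
      integral_comp_neg (a := -a) (b := 0) (fun x => f |x|)
  rw [integral_comp_sub_right (fun x => f |x|), sub_sub_cancel_left, add_sub_cancel_left,
    ← integral_add_adjacent_intervals (b := 0), hleft, hright, two_mul]
  · exact (hfa.mono (uIcc_subset_uIcc_left (by simp [ha]))).intervalIntegrable
  · exact (hfa.mono (uIcc_subset_uIcc_right (by simp [ha]))).intervalIntegrable

theorem integral_add_abs_sub_pi_rpow_neg_le {p ε : ℝ} (hp : 1 < p) (hε : 0 < ε) :
    ∫ θ in 0..2 * π, (ε + |θ - π|) ^ (-p) ≤ 2 / (p - 1) * ε ^ (1 - p) := by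
  have hcont : ContinuousOn (fun x : ℝ => (ε + x) ^ (-p)) (Icc 0 π) :=
    (continuousOn_const.add continuousOn_id).rpow_const fun x hx =>
      Or.inl (by linarith [hx.1] : 0 < ε + x).ne'
  have h := intervalIntegral.integral_comp_abs_sub π pi_pos.le hcont
  rw [sub_self, ← two_mul] at h
  have hprim : ∫ x in 0..π, (ε + x) ^ (-p) = (ε ^ (1 - p) - (ε + π) ^ (1 - p)) / (p - 1) := by
    rw [intervalIntegral.integral_comp_add_left (fun x => x ^ (-p)), add_zero,
      integral_rpow (Or.inr ⟨by linarith, fun h0 => ?_⟩)]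
    · rw [show -p + 1 = -(p - 1) by ring, show 1 - p = -(p - 1) by ring, div_neg, ← neg_div,
        neg_sub]
    · rw [uIcc_of_le (by linarith [pi_pos])] at h0
      linarith [h0.1]
  rw [h, hprim, mul_div_assoc', div_mul_eq_mul_div]
  gcongr
  linarith [rpow_nonneg (by linarith [pi_pos] : 0 ≤ ε + π) (1 - p)]

open FormalMultilinearSeries in
theorem cauchyPowerSeries_eq_ofScalars_of_hasSum {f : ℂ → ℂ} {a : ℕ → ℂ} {c : ℂ} {R r : ℝ}
    (hf : DifferentiableOn ℂ f (ball c R))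
    (ha : ∀ z ∈ ball c R, HasSum (fun n => a n * (z - c) ^ n) (f z)) (hr : 0 < r) (hrR : r < R) :
    cauchyPowerSeries f c r = ofScalars ℂ a := by
  lift r to NNReal using hr.le
  have hr' : 0 < r := by exact_mod_cast hr
  have hcauchy : HasFPowerSeriesAt f (cauchyPowerSeries f c r) c :=
    ((hf.mono (closedBall_subset_ball hrR)).hasFPowerSeriesOnBall hr').hasFPowerSeriesAt
  have hrad : (r : ENNReal) ≤ (ofScalars ℂ a).radius := by
    refine (ofScalars ℂ a).le_radius_of_tendsto (l := 0) ?_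
    have hmem : c + r ∈ ball c R := by simpa [abs_of_pos hr] using hrR
    simpa [ofScalars_norm] using (ha _ hmem).summable.tendsto_atTop_zero.norm
  have hseries : HasFPowerSeriesOnBall f (ofScalars ℂ a) c r := by
    refine ⟨hrad, by exact_mod_cast hr', fun {y} hy => ?_⟩
    have hmem : c + y ∈ ball c R := by
      rw [mem_eball_zero_iff, enorm_lt_coe] at hy
      simpa using (show ‖y‖ < r from hy).trans hrR
    simpa [ofScalars_apply_eq, mul_comm] using ha _ hmem
  exact hcauchy.eq_formalMultilinearSeries hseries.hasFPowerSeriesAt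

theorem norm_comp_circleMap_one_le {φ : ℂ → ℂ} {M p r θ : ℝ} (hM : 0 ≤ M) (hp : 0 ≤ p)
    (hφ : ∀ s ∈ ball (1 : ℂ) 1, ‖φ s‖ ≤ M * ‖s‖ ^ (-p)) (hr : 1 / 2 ≤ r) (hr1 : r < 1)
    (hθ : |θ - π| ≤ π) : ‖φ (circleMap 1 r θ)‖ ≤ M * π ^ p * (1 - r + |θ - π|) ^ (-p) := by
  have hmem : circleMap 1 r θ ∈ ball (1 : ℂ) 1 := by
    rw [mem_ball, dist_eq_norm, circleMap_sub_center, norm_circleMap_zero,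
      abs_of_pos (by linarith)]
    exact hr1
  have h1r : 0 < 1 - r := by linarith
  calc ‖φ (circleMap 1 r θ)‖ ≤ M * ‖circleMap 1 r θ‖ ^ (-p) := hφ _ hmem
    _ ≤ M * ((1 - r + |θ - π|) / π) ^ (-p) := by
        gcongr M * ?_
        exact rpow_le_rpow_of_nonpos (by positivity) (div_pi_le_norm_circleMap_one hr hθ)
          (by linarith)
    _ = M * π ^ p * (1 - r + |θ - π|) ^ (-p) := by
        rw [div_rpow (by positivity) pi_pos.le, rpow_neg pi_pos.le, div_inv_eq_mul]
        ring

theorem norm_cauchyPowerSeries_one_le {φ : ℂ → ℂ} {M p r : ℝ} (hM : 0 ≤ M) (hp : 1 < p)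
    (hφ : ∀ s ∈ ball (1 : ℂ) 1, ‖φ s‖ ≤ M * ‖s‖ ^ (-p)) (hr : 1 / 2 ≤ r) (hr1 : r < 1) (n : ℕ) :
    ‖cauchyPowerSeries φ 1 r n‖ ≤ M * π ^ (p - 1) / (p - 1) * (1 - r) ^ (1 - p) * r⁻¹ ^ n := by
  have h1r : 0 < 1 - r := by linarith
  have hcont : Continuous fun θ : ℝ => M * π ^ p * (1 - r + |θ - π|) ^ (-p) :=
    continuous_const.mul <| (continuous_const.add (continuous_abs.comp
      (continuous_id.sub continuous_const))).rpow_const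
        fun θ => Or.inl (add_pos_of_pos_of_nonneg h1r (abs_nonneg _)).ne'
  have hint : ∫ θ in 0..2 * π, ‖φ (circleMap 1 r θ)‖
      ≤ ∫ θ in 0..2 * π, M * π ^ p * (1 - r + |θ - π|) ^ (-p) := by
    simp only [intervalIntegral.integral_of_le two_pi_pos.le]
    refine MeasureTheory.integral_mono_of_nonneg (.of_forall fun _ => norm_nonneg _)
      (hcont.integrableOn_Icc.mono_set Ioc_subset_Icc_self)
      ((MeasureTheory.ae_restrict_iff' measurableSet_Ioc).mpr (.of_forall fun θ hθ => ?_))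
    exact norm_comp_circleMap_one_le hM (by linarith) hφ hr hr1
      (abs_le.mpr ⟨by linarith [hθ.1], by linarith [hθ.2]⟩)
  rw [intervalIntegral.integral_const_mul] at hint
  calc ‖cauchyPowerSeries φ 1 r n‖
      ≤ ((2 * π)⁻¹ * ∫ θ in 0..2 * π, ‖φ (circleMap 1 r θ)‖) * |r|⁻¹ ^ n :=
        norm_cauchyPowerSeries_le _ _ _ _
    _ ≤ ((2 * π)⁻¹ * (M * π ^ p * (2 / (p - 1) * (1 - r) ^ (1 - p)))) * r⁻¹ ^ n := by
        rw [abs_of_pos (by linarith)]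
        gcongr
        exact hint.trans (by gcongr; exact integral_add_abs_sub_pi_rpow_neg_le hp h1r)
    _ = M * π ^ (p - 1) / (p - 1) * (1 - r) ^ (1 - p) * r⁻¹ ^ n := by
        rw [rpow_sub_one pi_pos.ne']
        field_simp

theorem exists_norm_coeff_succ_le {φ : ℂ → ℂ} {b : ℕ → ℂ} {M p : ℝ}
    (hφ : DifferentiableOn ℂ φ (ball 1 1))
    (hb : ∀ s ∈ ball (1 : ℂ) 1, HasSum (fun n => b n * (1 - s) ^ n) (φ s))
    (hM : 0 ≤ M) (hp : 1 < p) (hbound : ∀ s ∈ ball (1 : ℂ) 1, ‖φ s‖ ≤ M * ‖s‖ ^ (-p)) :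
    ∃ K, ∀ n : ℕ, ‖b (n + 1)‖ ≤ K * ((n : ℝ) + 1) ^ (p - 1) := by
  have hb' : ∀ s ∈ ball (1 : ℂ) 1, HasSum (fun n => (-1) ^ n * b n * (s - 1) ^ n) (φ s) := by
    intro s hs
    convert hb s hs using 2 with n
    rw [show 1 - s = -1 * (s - 1) by ring, mul_pow]
    ring
  refine ⟨M * π ^ (p - 1) / (p - 1) * 2 ^ (p - 1) * rexp 1, fun n => ?_⟩
  have hn : (0 : ℝ) < (n : ℝ) + 1 := by positivity
  -- this radius keeps `r⁻¹ ^ (n + 1) ≤ e` while `(1 - r) ^ (1 - p) = (n + 2) ^ (p - 1)`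
  set r : ℝ := 1 - ((n : ℝ) + 2)⁻¹ with hr_def
  have hr : 1 / 2 ≤ r := by
    rw [hr_def, le_sub_comm, inv_le_comm₀ (by positivity) (by norm_num)]
    linarith
  have hr1 : r < 1 := sub_lt_self 1 (by positivity)
  have hcoeff : ‖b (n + 1)‖ = ‖cauchyPowerSeries φ 1 r (n + 1)‖ := by
    rw [cauchyPowerSeries_eq_ofScalars_of_hasSum hφ hb' (by linarith) hr1,
      FormalMultilinearSeries.ofScalars_norm]
    simp
  have hgap : (1 - r) ^ (1 - p) ≤ 2 ^ (p - 1) * ((n : ℝ) + 1) ^ (p - 1) := by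
    rw [hr_def, sub_sub_cancel, inv_rpow (by positivity), ← rpow_neg (by positivity), neg_sub,
      ← mul_rpow zero_le_two hn.le]
    gcongr
    linarith
  have hpow : r⁻¹ ^ (n + 1) ≤ rexp 1 := by
    have : r⁻¹ = 1 + ((n + 1 : ℕ) : ℝ)⁻¹ := by
      rw [hr_def, show (1 : ℝ) - ((n : ℝ) + 2)⁻¹ = ((n : ℝ) + 1) / ((n : ℝ) + 2) by
        field_simp; ring, inv_div]
      push_cast
      field_simp
      ring
    rw [this]
    exact Real.one_add_inv_pow_le_exp
  rw [hcoeff]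
  calc ‖cauchyPowerSeries φ 1 r (n + 1)‖
      ≤ M * π ^ (p - 1) / (p - 1) * (1 - r) ^ (1 - p) * r⁻¹ ^ (n + 1) :=
        norm_cauchyPowerSeries_one_le hM hp hbound hr hr1 _
    _ ≤ M * π ^ (p - 1) / (p - 1) * (2 ^ (p - 1) * ((n : ℝ) + 1) ^ (p - 1)) * rexp 1 := by
        have : 0 ≤ p - 1 := by linarith
        gcongr
    _ = _ := by ring

theorem summable_div_rpow_of_le_rpow {u : ℕ → ℝ} {K q C : ℝ} (hu0 : ∀ n, 0 ≤ u n)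
    (hu : ∀ n, u n ≤ K * ((n : ℝ) + 1) ^ q) (hqC : q < C - 1) :
    Summable fun n => u n / ((n : ℝ) + 1) ^ C := by
  have hsum : Summable fun n : ℕ => ((n : ℝ) + 1) ^ (q - C) := by
    simpa using (summable_nat_add_iff 1).mpr
      (Real.summable_nat_rpow.mpr (by linarith : q - C < -1))
  refine Summable.of_nonneg_of_le (fun n => by have := hu0 n; positivity) (fun n => ?_)
    (hsum.mul_left K)
  rw [rpow_sub (by positivity), mul_div_assoc']
  exact div_le_div_of_nonneg_right (hu n) (by positivity)

theorem stmt_4 (A B : ℝ) (hA : 0 < A) (hB : 0 < B) (F : ℂ → ℂ)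
    (hF : DifferentiableOn ℂ F borelDelta)
    (hbound : ∀ ζ ∈ borelDelta, ‖F ζ‖ ≤ A * Real.exp (B * ‖ζ‖))
    (b : ℕ → ℂ)
    (hb : ∀ s ∈ Metric.ball (1 : ℂ) 1,
      HasSum (fun n : ℕ => b n * (1 - s) ^ n) (F (-Complex.log s)))
    (C : ℝ) (hC : max B 1 < C) :
    Summable (fun n : ℕ => ‖b (n + 1)‖ / ((n : ℝ) + 1) ^ C) := by
  obtain ⟨p, hp1, hBp, hpC⟩ : ∃ p, 1 < p ∧ B ≤ p ∧ p < C :=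
    ⟨(max B 1 + C) / 2, by linarith [le_max_right B 1], by linarith [le_max_left B 1],
      by linarith⟩
  have hφ : DifferentiableOn ℂ (fun s => F (-Complex.log s)) (ball 1 1) :=
    hF.comp (fun s hs =>
      (differentiableAt_log (ball_one_subset_slitPlane hs)).neg.differentiableWithinAt)
      (mapsTo_image _ _)
  have hφb : ∀ s ∈ ball (1 : ℂ) 1,
      ‖F (-Complex.log s)‖ ≤ A * rexp (B * π) * 2 ^ (B + p) * ‖s‖ ^ (-p) := by
    intro s hs
    have hs1 : ‖s - 1‖ < 1 := mem_ball_iff_norm.mp hs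
    have hs0 : 0 < ‖s‖ := by
      linarith [norm_sub_norm_le 1 s, norm_sub_rev s 1, norm_one (α := ℂ)]
    have hs2 : ‖s‖ ≤ 2 := by linarith [norm_le_norm_add_norm_sub' s 1, norm_one (α := ℂ)]
    calc ‖F (-Complex.log s)‖ ≤ A * rexp (B * ‖-Complex.log s‖) :=
          hbound _ (mem_image_of_mem _ hs)
      _ ≤ A * (rexp (B * π) * 2 ^ (B + p) * ‖s‖ ^ (-p)) := by
          rw [norm_neg]
          gcongr
          exact exp_mul_norm_log_le hB.le hBp hs0 hs2
      _ = _ := by ring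
  obtain ⟨K, hK⟩ := exists_norm_coeff_succ_le hφ hb (by positivity) hp1 hφb
  exact summable_div_rpow_of_le_rpow (fun n => norm_nonneg _) hK (by linarith)
end

section
/- Let f̃ be a holomorphic function on Δ with |f̃(ζ)| ≤ A·e^{B|ζ|} for all ζ ∈ Δ, where A>0, B>0, and set φ(s) = f̃(−Log s) for s ∈ D(1,1). Then for every real ζ ≥ 0 and every integer n ≥ 0 (with the convention 0^0 = 1), the n-th derivative of φ satisfies |φ^{(n)}(e^{−ζ})| ≤ A·(n+B)^{n+B}·n!/(B^B·n^n) · e^{(n+B)ζ}. -/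
open Complex Real Metric Set

/-!
Comparing the Taylor series of `Log (1 - w)` and `-log (1 - |w|)` termwise gives
`|Log s| ≤ -log (1 - |s - 1|)` on `D(1,1)`, so `|φ s| ≤ A (1 - |s - 1|) ^ (-B)`. Cauchy's estimate
on the circle of radius `r < x` around `x = e^{-ζ}` then bounds `|φ^{(n)}(x)|` by
`n! A (x - r) ^ (-B) / r ^ n`, and the minimising radius `r = x n / (n + B)` turns this into the
stated bound, since `x ^ (-(n + B)) = e^{(n + B) ζ}`.
-/

lemma Complex.norm_log_one_sub_le {z : ℂ} (hz : ‖z‖ < 1) :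
    ‖log (1 - z)‖ ≤ -Real.log (1 - ‖z‖) := by
  rw [← norm_neg]
  refine (hasSum_taylorSeries_neg_log' hz).norm_le_of_bounded
    (Real.hasSum_pow_div_log_of_abs_lt_one (by rwa [abs_norm])) fun n ↦ ?_
  rw [norm_div, norm_pow]
  norm_cast

lemma Complex.norm_log_le_of_mem_ball_one {s : ℂ} (hs : s ∈ ball (1 : ℂ) 1) :
    ‖log s‖ ≤ -Real.log (1 - dist s 1) := by
  rw [mem_ball, dist_eq_norm, ← norm_neg, neg_sub] at hs
  simpa [dist_eq_norm, ← norm_neg (s - 1)] using norm_log_one_sub_le hs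

lemma differentiableOn_comp_neg_log {F : ℂ → ℂ} (hF : DifferentiableOn ℂ F borelDelta) :
    DifferentiableOn ℂ (fun s ↦ F (-Complex.log s)) (ball 1 1) := by
  refine hF.comp (fun s hs ↦ ?_) fun s hs ↦ ⟨s, hs, rfl⟩
  have hslit : s ∈ slitPlane := by
    simpa using mem_slitPlane_of_norm_lt_one (z := s - 1) (by simpa [dist_eq_norm] using hs)
  exact (differentiableAt_log hslit).neg.differentiableWithinAt

lemma norm_comp_neg_log_le {F : ℂ → ℂ} {A B : ℝ} (hA : 0 ≤ A) (hB : 0 ≤ B)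
    (hF : ∀ ζ ∈ borelDelta, ‖F ζ‖ ≤ A * Real.exp (B * ‖ζ‖)) {s : ℂ} (hs : s ∈ ball (1 : ℂ) 1) :
    ‖F (-log s)‖ ≤ A * (1 - dist s 1) ^ (-B) := by
  have hpos : 0 < 1 - dist s 1 := sub_pos.2 hs
  calc ‖F (-log s)‖ ≤ A * Real.exp (B * ‖-log s‖) := hF _ ⟨s, hs, rfl⟩
    _ ≤ A * Real.exp (B * -Real.log (1 - dist s 1)) := by
      rw [norm_neg]
      gcongr
      exact norm_log_le_of_mem_ball_one hs
    _ = A * (1 - dist s 1) ^ (-B) := by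
      rw [rpow_def_of_pos hpos]
      ring_nf

theorem norm_iteratedDeriv_le_of_norm_le_rpow {E : Type*} [NormedAddCommGroup E]
    [NormedSpace ℂ E] [CompleteSpace E] {f : ℂ → E} {z₀ c : ℂ} {ρ A B r : ℝ}
    (hA : 0 ≤ A) (hB : 0 ≤ B) (hf : DifferentiableOn ℂ f (ball z₀ ρ))
    (hbound : ∀ z ∈ ball z₀ ρ, ‖f z‖ ≤ A * (ρ - dist z z₀) ^ (-B))
    (hr : 0 < r) (hrc : r < ρ - dist c z₀) (n : ℕ) :
    ‖iteratedDeriv n f c‖ ≤ n.factorial * (A * (ρ - dist c z₀ - r) ^ (-B)) / r ^ n := by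
  have hsub : closedBall c r ⊆ ball z₀ ρ := closedBall_subset_ball' (by linarith)
  refine Complex.norm_iteratedDeriv_le_of_forall_mem_sphere_norm_le n hr
    (hf.diffContOnCl_ball hsub) fun z hz ↦ ?_
  refine (hbound z (hsub (sphere_subset_closedBall hz))).trans ?_
  have hdist : dist z z₀ ≤ r + dist c z₀ := by
    simpa [mem_sphere.1 hz] using dist_triangle z c z₀
  exact mul_le_mul_of_nonneg_left
    (rpow_le_rpow_of_nonpos (sub_pos.2 hrc) (by linarith) (neg_nonpos.2 hB)) hA

lemma factorial_mul_div_pow_at_optimal_radius {A B x : ℝ} (hB : 0 < B) (hx : 0 < x) (n : ℕ) :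
    n.factorial * (A * (x - x * n / (n + B)) ^ (-B)) / (x * n / (n + B)) ^ n =
      A * ((n : ℝ) + B) ^ ((n : ℝ) + B) * n.factorial / (B ^ B * (n : ℝ) ^ (n : ℝ)) *
        x ^ (-((n : ℝ) + B)) := by
  have hnB : (0 : ℝ) < n + B := by positivity
  have hxr : x - x * n / (n + B) = x * B / (n + B) := by field_simp; ring
  rw [hxr, rpow_neg (by positivity), div_rpow (by positivity) hnB.le, mul_rpow hx.le hB.le,
    rpow_neg hx.le, rpow_add hnB, rpow_add hx, rpow_natCast, rpow_natCast, rpow_natCast]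
  rw [div_pow, mul_pow]
  field_simp

theorem stmt_7 (A B : ℝ) (hA : 0 < A) (hB : 0 < B) (F φ : ℂ → ℂ)
    (hF : DifferentiableOn ℂ F borelDelta)
    (hbound : ∀ ζ ∈ borelDelta, ‖F ζ‖ ≤ A * Real.exp (B * ‖ζ‖))
    (hφ : ∀ s ∈ Metric.ball (1 : ℂ) 1, φ s = F (-Complex.log s)) :
    ∀ ζ : ℝ, 0 ≤ ζ → ∀ n : ℕ,
      ‖iteratedDeriv n φ ((Real.exp (-ζ) : ℝ) : ℂ)‖ ≤
        A * ((n : ℝ) + B) ^ ((n : ℝ) + B) * (Nat.factorial n : ℝ) /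
            (B ^ B * (n : ℝ) ^ (n : ℝ)) *
          Real.exp (((n : ℝ) + B) * ζ) := by
  intro ζ hζ n
  have hφdiff : DifferentiableOn ℂ φ (ball 1 1) := (differentiableOn_comp_neg_log hF).congr hφ
  have hgrowth : ∀ s ∈ ball (1 : ℂ) 1, ‖φ s‖ ≤ A * (1 - dist s 1) ^ (-B) := fun s hs ↦
    hφ s hs ▸ norm_comp_neg_log_le hA.le hB.le hbound hs
  set x := Real.exp (-ζ)
  have hx : 0 < x := Real.exp_pos _
  have hdist : 1 - dist (x : ℂ) 1 = x := by
    rw [Complex.dist_eq, ← ofReal_one, ← ofReal_sub, norm_real, Real.norm_eq_abs,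
      abs_of_nonpos (by simp [x, hζ]), neg_sub, sub_sub_cancel]
  have hexp (t : ℝ) : x ^ (-t) = Real.exp (t * ζ) := by
    rw [← Real.exp_mul]; ring_nf
  have hcauchy : ‖iteratedDeriv n φ x‖ ≤
      n.factorial * (A * (x - x * n / (n + B)) ^ (-B)) / (x * n / (n + B)) ^ n := by
    rcases n.eq_zero_or_pos with rfl | hn
    · simpa [hdist] using hgrowth x (by rw [mem_ball, ← sub_pos, hdist]; exact hx)
    · have hr : x * n / (n + B) < 1 - dist (x : ℂ) 1 := by
        rw [hdist, div_lt_iff₀ (by positivity)]; nlinarith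
      simpa only [hdist] using
        norm_iteratedDeriv_le_of_norm_le_rpow hA.le hB.le hφdiff hgrowth (by positivity) hr n
  rwa [factorial_mul_div_pow_at_optimal_radius hB hx, hexp] at hcauchy
end

section
/- Fix λ>0, A>0, B>0 and z ∈ ℂ with Re z > B. Define for each integer N ≥ 0: R_fact(λ,A,B,N,z) = (A/(λB)^{λB}) · ((N+λB+1)^{N+λB+1}/(N+1)^N) · |Γ(λz)·Γ(N+1)/Γ(λz+N+1)| / (Re z − B). Then R_fact(λ,A,B,N,z) is asymptotically equivalent, as N → ∞, to A·e^{λB(1−ln(λB))}/N^{λ(Re z−B)−1} · |Γ(λz)|/(Re z − B); that is, the ratio of the two expressions tends to 1 as N → ∞. -/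
open Complex Real Filter

/-!
Euler's limit formula `Γ(s) = lim n^s n! / (s (s+1) ⋯ (s+n))` says that
`|Γ(N+1) / Γ(w+N+1)| ~ N^(-Re w)`, and writing
`(N+c+1)^(N+c+1) / (N+1)^N = (N+1)^(c+1) (1 + c/(N+1))^(N+1+c)` shows that it is `~ e^c N^(c+1)`.
With `w = λz`, `c = λB` and `e^(c (1 - log c)) = e^c / c^c`, all powers of `N` and all constants
cancel in the ratio.
-/

namespace Complex

theorem Gamma_add_nat_eq_Gamma_mul_prod {s : ℂ} (hs : ∀ m : ℕ, s ≠ -m) (n : ℕ) :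
    Gamma (s + n) = Gamma s * ∏ j ∈ Finset.range n, (s + j) := by
  induction n with
  | zero => simp
  | succ n ih =>
    have hsn : s + n ≠ 0 := fun h => hs n (eq_neg_of_add_eq_zero_left h)
    rw [Nat.cast_succ, ← add_assoc, Gamma_add_one _ hsn, ih, Finset.prod_range_succ]
    ring

theorem GammaSeq_eq_cpow_mul_Gamma_div {s : ℂ} (hs : ∀ m : ℕ, s ≠ -m) (n : ℕ) :
    GammaSeq s n = (n : ℂ) ^ s * Gamma (n + 1) / Gamma (s + n + 1) * Gamma s := by
  have hprod := Gamma_add_nat_eq_Gamma_mul_prod hs (n + 1)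
  rw [Nat.cast_succ, ← add_assoc] at hprod
  rw [GammaSeq, hprod, Gamma_nat_eq_factorial, mul_comm (Gamma s), ← div_div,
    div_mul_cancel₀ _ (Gamma_ne_zero hs)]

theorem tendsto_cpow_mul_Gamma_nat_add_one_div_Gamma {s : ℂ} (hs : Gamma s ≠ 0) :
    Tendsto (fun n : ℕ => (n : ℂ) ^ s * Gamma (n + 1) / Gamma (s + n + 1)) atTop (nhds 1) := by
  have hs' : ∀ m : ℕ, s ≠ -m := fun m h => hs (h ▸ Gamma_neg_nat_eq_zero m)
  have := (GammaSeq_tendsto_Gamma s).div_const (Gamma s)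
  rw [div_self hs] at this
  refine this.congr fun n => ?_
  rw [GammaSeq_eq_cpow_mul_Gamma_div hs' n, mul_div_cancel_right₀ _ hs]

theorem tendsto_rpow_re_mul_norm_Gamma_nat_add_one_div {s : ℂ} (hs : Gamma s ≠ 0) :
    Tendsto (fun n : ℕ => (n : ℝ) ^ s.re * ‖Gamma (n + 1)‖ / ‖Gamma (s + n + 1)‖)
      atTop (nhds 1) := by
  have := (tendsto_cpow_mul_Gamma_nat_add_one_div_Gamma hs).norm
  rw [norm_one] at this
  refine this.congr' ?_
  filter_upwards [eventually_gt_atTop 0] with n hn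
  rw [norm_div, norm_mul, norm_natCast_cpow_of_pos hn]

end Complex

namespace Real

theorem tendsto_one_add_div_atTop (c : ℝ) : Tendsto (fun x : ℝ => 1 + c / x) atTop (nhds 1) := by
  simpa using (tendsto_const_nhds.div_atTop tendsto_id).const_add (1 : ℝ)

theorem tendsto_one_add_div_rpow_add_exp (c d : ℝ) :
    Tendsto (fun x : ℝ => (1 + c / x) ^ (x + d)) atTop (nhds (exp c)) := by
  have hbase := tendsto_one_add_div_atTop c
  have := (tendsto_one_add_div_rpow_exp c).mul (hbase.rpow_const (p := d) (Or.inl one_ne_zero))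
  rw [one_rpow, mul_one] at this
  refine this.congr' ?_
  filter_upwards [hbase.eventually (lt_mem_nhds one_pos)] with x hx
  rw [rpow_add hx]

theorem tendsto_add_rpow_div_rpow_div_exp_mul_rpow (c : ℝ) :
    Tendsto (fun x : ℝ => (x + c + 1) ^ (x + c + 1) / (x + 1) ^ x / (exp c * x ^ (c + 1)))
      atTop (nhds 1) := by
  have hE := (tendsto_one_add_div_rpow_add_exp c c).comp
    (tendsto_atTop_add_const_right atTop 1 tendsto_id)
  have hP := (tendsto_one_add_div_atTop 1).rpow_const (p := c + 1) (Or.inl one_ne_zero)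
  have := (hE.div_const (exp c)).mul hP
  rw [div_self (exp_ne_zero c), one_rpow, mul_one] at this
  refine this.congr' ?_
  filter_upwards [eventually_gt_atTop 0, eventually_gt_atTop (-c - 1)] with x hx hxc
  have hx1 : 0 < x + 1 := by linarith
  have hxc1 : 0 < x + c + 1 := by linarith
  have hq : 1 + c / (x + 1) = (x + c + 1) / (x + 1) := by field_simp; ring
  have h1 : 1 + 1 / x = (x + 1) / x := by field_simp
  have hsplit : (x + 1) ^ (x + c + 1) = (x + 1) ^ x * (x + 1) ^ (c + 1) := by
    rw [← rpow_add hx1]; congr 1; ring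
  simp only [Function.comp_apply, id, hq, h1]
  rw [div_rpow hxc1.le hx1.le, div_rpow hx1.le hx.le, show x + 1 + c = x + c + 1 by ring, hsplit]
  field_simp

theorem exp_mul_one_sub_log {c : ℝ} (hc : 0 < c) : exp (c * (1 - log c)) = exp c / c ^ c := by
  rw [rpow_def_of_pos hc, ← exp_sub]
  ring_nf

end Real

theorem stmt_10 (lam A B : ℝ) (hlam : 0 < lam) (hA : 0 < A) (hB : 0 < B)
    (z : ℂ) (hz : B < z.re) :
    Filter.Tendsto (fun N : ℕ =>
      ((A / (lam * B) ^ (lam * B)) *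
        (((N : ℝ) + lam * B + 1) ^ ((N : ℝ) + lam * B + 1) / ((N : ℝ) + 1) ^ (N : ℝ)) *
          (‖Complex.Gamma ((lam : ℂ) * z) * Complex.Gamma ((N : ℂ) + 1) /
              Complex.Gamma ((lam : ℂ) * z + N + 1)‖ / (z.re - B)))
      /
      (A * Real.exp (lam * B * (1 - Real.log (lam * B))) / (N : ℝ) ^ (lam * (z.re - B) - 1) *
        (‖Complex.Gamma ((lam : ℂ) * z)‖ / (z.re - B))))
      Filter.atTop (nhds 1) := by
  set w : ℂ := (lam : ℂ) * z
  have hwre : w.re = lam * z.re := by simp [w]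
  have hw : 0 < w.re := by rw [hwre]; nlinarith
  have hΓw : Gamma w ≠ 0 := Gamma_ne_zero_of_re_pos hw
  have hd : z.re - B ≠ 0 := by linarith
  have hcc : (lam * B) ^ (lam * B) ≠ 0 := by positivity
  have := ((tendsto_add_rpow_div_rpow_div_exp_mul_rpow (lam * B)).comp
    tendsto_natCast_atTop_atTop).mul (tendsto_rpow_re_mul_norm_Gamma_nat_add_one_div hΓw)
  rw [mul_one] at this
  refine this.congr' ?_
  filter_upwards [eventually_gt_atTop 0] with n hn
  have hn0 : (0 : ℝ) < n := Nat.cast_pos.mpr hn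
  have hsplit : (n : ℝ) ^ w.re = (n : ℝ) ^ (lam * (z.re - B) - 1) * (n : ℝ) ^ (lam * B + 1) := by
    rw [← rpow_add hn0, hwre]; congr 1; ring
  have hΓn : Gamma (w + n + 1) ≠ 0 :=
    Gamma_ne_zero_of_re_pos (by simp only [add_re, natCast_re, one_re]; linarith)
  rw [Function.comp_apply, exp_mul_one_sub_log (by positivity), hsplit, norm_div, norm_mul]
  field_simp
end

section
/- Let λ>0 and let f̃ be a holomorphic function on Δ_λ = {λζ : ζ ∈ Δ} with |f̃(ζ)| ≤ A·e^{B|ζ|} for all ζ ∈ Δ_λ, where A>0, B>0. Let (b_n^{(λ)})_{n≥0} be the Taylor coefficients at 1 of φ_λ(s) := f̃(−λ·Log s), i.e. φ_λ(s) = ∑_{n≥0} b_n^{(λ)}(1−s)^n on D(1,1). Then for every n ≥ 0 (with the convention 0^0 = 1): |b_n^{(λ)}| ≤ A·(n+λB)^{n+λB}/((λB)^{λB}·n^n). -/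
open Complex Real Metric Set

/-- `Δ_λ = {λζ : ζ ∈ Δ}`. -/
noncomputable def borelDeltaLam (lam : ℝ) : Set ℂ :=
  (fun ζ : ℂ => (lam : ℂ) * ζ) '' borelDelta

/-!
On the circle `‖1 - s‖ = r < 1` the logarithm satisfies `‖Log s‖ ≤ -log (1 - r)` (compare the
Taylor series of `-Log (1 - z)` termwise with that of `-log (1 - ‖z‖)`), so the growth bound gives
`‖φ_λ s‖ ≤ A (1 - r)^(-λB)`. Cauchy's estimate then yields `‖b n‖ r^n ≤ A (1 - r)^(-λB)` for every
`r ∈ [0, 1)`; optimising over `r` gives the claimed bound.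
-/

open scoped Nat Topology

theorem eq_of_hasSum_pow_smul {𝕜 E : Type*} [NontriviallyNormedField 𝕜] [NormedAddCommGroup E]
    [NormedSpace 𝕜 E] {f : 𝕜 → E} {c : 𝕜} {a b : ℕ → E}
    (ha : ∀ᶠ z in 𝓝 c, HasSum (fun n => (z - c) ^ n • a n) (f z))
    (hb : ∀ᶠ z in 𝓝 c, HasSum (fun n => (z - c) ^ n • b n) (f z)) : a = b := by
  let series (a : ℕ → E) : FormalMultilinearSeries 𝕜 𝕜 E :=
    fun n => ContinuousMultilinearMap.mkPiRing 𝕜 (Fin n) (a n)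
  have hasFPowerSeriesAt_series {a : ℕ → E}
      (ha : ∀ᶠ z in 𝓝 c, HasSum (fun n => (z - c) ^ n • a n) (f z)) :
      HasFPowerSeriesAt f (series a) c :=
    hasFPowerSeriesAt_iff'.2 (by simpa [series, FormalMultilinearSeries.coeff] using ha)
  funext n
  simpa [series, FormalMultilinearSeries.coeff] using congrArg (·.coeff n)
    ((hasFPowerSeriesAt_series ha).eq_formalMultilinearSeries (hasFPowerSeriesAt_series hb))

theorem Real.rpow_self_pos {x : ℝ} (hx : 0 ≤ x) : 0 < x ^ x := by
  rcases hx.eq_or_lt with rfl | hx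
  · simp
  · exact Real.rpow_pos_of_pos hx x

namespace Complex

section Cauchy

variable {E : Type*} [NormedAddCommGroup E] [NormedSpace ℂ E] [CompleteSpace E]
  {f : ℂ → E} {c : ℂ} {R : ℝ} {a : ℕ → E}

theorem eq_inv_factorial_smul_iteratedDeriv_of_hasSum (hf : DifferentiableOn ℂ f (ball c R))
    (hR : 0 < R) (ha : ∀ᶠ z in 𝓝 c, HasSum (fun n => (z - c) ^ n • a n) (f z)) (n : ℕ) :
    a n = (n ! : ℂ)⁻¹ • iteratedDeriv n f c := by
  refine congrFun (eq_of_hasSum_pow_smul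
    (b := fun n => (n ! : ℂ)⁻¹ • iteratedDeriv n f c) ha ?_) n
  filter_upwards [ball_mem_nhds c hR] with z hz
  simpa only [smul_comm ((_ : ℂ)⁻¹)] using hasSum_taylorSeries_on_ball hf hz

theorem norm_mul_pow_le_of_forall_mem_sphere_norm_le (hf : DifferentiableOn ℂ f (ball c R))
    (ha : ∀ᶠ z in 𝓝 c, HasSum (fun n => (z - c) ^ n • a n) (f z)) {r M : ℝ} (hr : 0 ≤ r)
    (hrR : r < R) (hM : ∀ z ∈ sphere c r, ‖f z‖ ≤ M) (n : ℕ) : ‖a n‖ * r ^ n ≤ M := by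
  have hcoeff := eq_inv_factorial_smul_iteratedDeriv_of_hasSum hf (hr.trans_lt hrR) ha n
  rcases hr.eq_or_lt with rfl | hr
  · have hfc : ‖f c‖ ≤ M := hM c (by simp)
    rcases n with _ | n
    · simpa [hcoeff] using hfc
    · simpa using (norm_nonneg _).trans hfc
  · have hcauchy := norm_iteratedDeriv_le_of_forall_mem_sphere_norm_le n hr
      (hf.diffContOnCl_ball (closedBall_subset_ball hrR)) hM
    rw [hcoeff, norm_smul, norm_inv, Complex.norm_natCast, ← le_div_iff₀ (by positivity),
      inv_mul_le_iff₀ (by positivity), ← mul_div_assoc]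
    exact hcauchy

end Cauchy

theorem norm_log_one_sub_le_s11 {z : ℂ} (hz : ‖z‖ < 1) :
    ‖Complex.log (1 - z)‖ ≤ -Real.log (1 - ‖z‖) := by
  rw [← norm_neg]
  refine (hasSum_taylorSeries_neg_log' hz).norm_le_of_bounded
    (Real.hasSum_pow_div_log_of_abs_lt_one (by rwa [abs_norm])) fun n => ?_
  rw [norm_div, norm_pow]
  norm_cast

end Complex

theorem neg_mul_log_mem_borelDeltaLam (lam : ℝ) {s : ℂ} (hs : s ∈ ball 1 1) :
    -(lam : ℂ) * Complex.log s ∈ borelDeltaLam lam :=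
  ⟨-Complex.log s, ⟨s, hs, rfl⟩, by ring⟩

theorem DifferentiableOn.comp_neg_mul_log {lam : ℝ} {F : ℂ → ℂ}
    (hF : DifferentiableOn ℂ F (borelDeltaLam lam)) :
    DifferentiableOn ℂ (fun s => F (-(lam : ℂ) * Complex.log s)) (ball 1 1) :=
  hF.comp (fun _ hs => ((differentiableAt_log (ball_one_subset_slitPlane hs)).const_mul
    _).differentiableWithinAt) fun _ => neg_mul_log_mem_borelDeltaLam lam

theorem norm_apply_neg_mul_log_le {lam A B r : ℝ} (hlam : 0 ≤ lam) (hA : 0 ≤ A) (hB : 0 ≤ B)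
    {F : ℂ → ℂ} (hbound : ∀ ζ ∈ borelDeltaLam lam, ‖F ζ‖ ≤ A * Real.exp (B * ‖ζ‖)) {s : ℂ}
    (hs : ‖1 - s‖ = r) (hr : r < 1) :
    ‖F (-(lam : ℂ) * Complex.log s)‖ ≤ A * (1 - r) ^ (-(lam * B)) := by
  have hlog : ‖Complex.log s‖ ≤ -Real.log (1 - r) := by
    have h := Complex.norm_log_one_sub_le_s11 (z := 1 - s) (by rwa [hs])
    rwa [sub_sub_cancel, hs] at h
  have hmem : s ∈ ball 1 1 := by rwa [mem_ball, dist_eq_norm, norm_sub_rev, hs]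
  calc ‖F (-(lam : ℂ) * Complex.log s)‖
      ≤ A * Real.exp (B * ‖-(lam : ℂ) * Complex.log s‖) :=
        hbound _ (neg_mul_log_mem_borelDeltaLam lam hmem)
    _ = A * Real.exp (lam * B * ‖Complex.log s‖) := by
        rw [norm_mul, norm_neg, Complex.norm_real, Real.norm_of_nonneg hlam]
        ring_nf
    _ ≤ A * Real.exp (lam * B * -Real.log (1 - r)) := by gcongr
    _ = A * (1 - r) ^ (-(lam * B)) := by
        rw [Real.rpow_def_of_pos (by linarith)]
        ring_nf

theorem norm_coeff_mul_pow_le {lam A B : ℝ} (hlam : 0 ≤ lam) (hA : 0 ≤ A) (hB : 0 ≤ B)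
    {F : ℂ → ℂ} (hF : DifferentiableOn ℂ F (borelDeltaLam lam))
    (hbound : ∀ ζ ∈ borelDeltaLam lam, ‖F ζ‖ ≤ A * Real.exp (B * ‖ζ‖)) {b : ℕ → ℂ}
    (hb : ∀ s ∈ ball (1 : ℂ) 1,
      HasSum (fun n => b n * (1 - s) ^ n) (F (-(lam : ℂ) * Complex.log s)))
    {r : ℝ} (hr0 : 0 ≤ r) (hr1 : r < 1) (n : ℕ) :
    ‖b n‖ * r ^ n ≤ A * (1 - r) ^ (-(lam * B)) := by
  have hseries : ∀ᶠ s in 𝓝 (1 : ℂ), HasSum (fun n => (s - 1) ^ n • ((-1) ^ n * b n))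
      (F (-(lam : ℂ) * Complex.log s)) := by
    filter_upwards [ball_mem_nhds (1 : ℂ) one_pos] with s hs
    convert hb s hs using 2 with k
    rw [smul_eq_mul, ← mul_assoc, ← mul_pow, mul_neg_one, neg_sub, mul_comm]
  simpa using Complex.norm_mul_pow_le_of_forall_mem_sphere_norm_le hF.comp_neg_mul_log hseries
    hr0 hr1 (fun _ hs => norm_apply_neg_mul_log_le hlam hA hB hbound
      (by rwa [norm_sub_rev, ← dist_eq_norm]) hr1) n

theorem stmt_11 (lam : ℝ) (hlam : 0 < lam) (A B : ℝ) (hA : 0 < A) (hB : 0 < B)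
    (F : ℂ → ℂ)
    (hF : DifferentiableOn ℂ F (borelDeltaLam lam))
    (hbound : ∀ ζ ∈ borelDeltaLam lam, ‖F ζ‖ ≤ A * Real.exp (B * ‖ζ‖))
    (b : ℕ → ℂ)
    (hb : ∀ s ∈ Metric.ball (1 : ℂ) 1,
      HasSum (fun n : ℕ => b n * (1 - s) ^ n) (F (-(lam : ℂ) * Complex.log s))) :
    ∀ n : ℕ, ‖b n‖ ≤
      A * ((n : ℝ) + lam * B) ^ ((n : ℝ) + lam * B) /
        ((lam * B) ^ (lam * B) * (n : ℝ) ^ (n : ℝ)) := by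
  intro n
  set c := lam * B
  set x : ℝ := (n : ℝ)
  have hc : 0 < c := mul_pos hlam hB
  have hx : 0 ≤ x := Nat.cast_nonneg n
  have hxc : 0 < x + c := by positivity
  -- `r = n / (n + c)` minimises `(1 - r) ^ (-c) / r ^ n` over `[0, 1)`.
  have hcauchy := norm_coeff_mul_pow_le hlam.le hA.le hB.le hF hbound hb
    (r := x / (x + c)) (by positivity) ((div_lt_one hxc).2 (by linarith)) n
  rw [← Real.rpow_natCast, one_sub_div hxc.ne', add_sub_cancel_left,
    Real.div_rpow hx hxc.le, Real.div_rpow hc.le hxc.le, Real.rpow_neg hc.le,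
    Real.rpow_neg hxc.le] at hcauchy
  have hxx := Real.rpow_self_pos hx
  calc ‖b n‖ = ‖b n‖ * (x ^ x / (x + c) ^ x) * ((x + c) ^ x / x ^ x) := by field_simp
    _ ≤ A * ((c ^ c)⁻¹ / ((x + c) ^ c)⁻¹) * ((x + c) ^ x / x ^ x) := by gcongr
    _ = A * (x + c) ^ (x + c) / (c ^ c * x ^ x) := by
      rw [Real.rpow_add hxc]
      field_simp
end
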